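/- arXiv:1505.01395 — 3 statements merged into one kernel-verified Lean document; each statement's English description precedes it below -/
import Mathlib

section
/- Let n ≥ 2. The minimum of #Ap(Γₙ, x) over x ∈ {1, …, q^{n−1}} equals the minimum of the following numbers: q^{⌊n/2⌋}, q^{n−1}, and (q^k − 1) + q^{n−1−2k} for k ∈ {1, …, ⌊n/2⌋ − 1}. (This minimum is the second Feng–Rao number E(Γₙ, 2).) -/
/-- A numerical semigroup: an additive submonoid of ℕ with finite complement. -/
def IsNumericalSemigroup (Γ : Set ℕ) : Prop :=
  0 ∈ Γ ∧ (∀ x ∈ Γ, ∀ y ∈ Γ, x + y ∈ Γ) ∧ Γᶜ.Finite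

/-- The Apéry set Ap(Γ,x) = {s ∈ Γ : s - x ∉ Γ}. -/
def Ap (Γ : Set ℕ) (x : ℕ) : Set ℕ := {s ∈ Γ | ∀ t ∈ Γ, s ≠ t + x}

/-- The conductor `cₙ` of the Garcia–Stichtenoth tower semigroups:
`cₙ = qⁿ - q^((n+1)/2)` if `n` is odd, `cₙ = qⁿ - q^(n/2)` if `n` is even. -/
def cGS (q n : ℕ) : ℕ := if n % 2 = 1 then q ^ n - q ^ ((n + 1) / 2) else q ^ n - q ^ (n / 2)

/-- The Weierstrass semigroups of the Garcia–Stichtenoth tower: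
Γ₁ = ℕ and Γₙ = q·Γ_{n-1} ∪ (cₙ + ℕ) for n ≥ 2. -/
def GST (q : ℕ) : ℕ → Set ℕ
  | 0 => Set.univ
  | 1 => Set.univ
  | n + 2 => (fun x => q * x) '' GST q (n + 1) ∪ {x | cGS q (n + 2) ≤ x}

/-!
Write `t = qⁿ - s`. For `s < qⁿ`, `s ∈ Γₙ` iff `q^j ∣ t` and `t ≤ q^⌈(n+j)/2⌉` for some `j < n`,
and `Γₙ` contains every `s ≥ qⁿ`; hence `#Ap(Γₙ, x) = x + #{s < qⁿ : s ∈ Γₙ, s + x ∉ Γₙ}`.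
If `q^b ≤ x < q^(b+1)` and `K = ⌊(n-b)/2⌋`, the `q^K - 1` numbers `s = qⁿ - m q^(n+1-2i)` with
`q^(i-1) < m ≤ q^i`, `1 ≤ i ≤ K`, lie in this set, and for `x = q^b` they exhaust it. So
`#Ap(Γₙ, x) ≥ q^b + q^K - 1` with equality at `x = q^b`, and minimizing `q^j + q^⌊(n-j)/2⌋ - 1`
over `j < n` only the `j` with `j = 0` or `n - 1 - j` even matter; these give the listed numbers.
-/

lemma Nat.clog_eq_succ_of_pow_lt_of_le {b m i : ℕ} (hb : 1 < b) (h₁ : b ^ i < m)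
    (h₂ : m ≤ b ^ (i + 1)) : Nat.clog b m = i + 1 :=
  le_antisymm ((Nat.clog_le_iff_le_pow hb).2 h₂) ((Nat.lt_clog_iff_pow_lt hb).2 h₁)

open Finset

open scoped Classical in
noncomputable def exitSet (Γ : Set ℕ) (N x : ℕ) : Finset ℕ :=
  {s ∈ range N | s ∈ Γ ∧ s + x ∉ Γ}

/-- For `Γ ⊇ [N, ∞)`, `Ap(Γ, x)` is `Γ ∩ [0, N + x)` minus the shifts `s + x` of the
`s ∈ Γ ∩ [0, N)` that stay in `Γ`. -/
theorem ncard_Ap_eq_add_card_exitSet {Γ : Set ℕ} {N : ℕ} (hN : ∀ s, N ≤ s → s ∈ Γ) (x : ℕ) :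
    (Ap Γ x).ncard = x + #(exitSet Γ N x) := by
  classical
  set G := {s ∈ range N | s ∈ Γ}
  set B := {s ∈ range (N + x) | s ∈ Γ}
  set I := {s ∈ G | s + x ∈ Γ}.image (· + x)
  have hAp : Ap Γ x = ↑(B \ I) := by
    ext s
    rw [mem_coe]
    simp only [Ap, B, I, G, Set.mem_ofPred_eq, mem_sdiff, mem_filter, mem_image, mem_range,
      not_exists, not_and]
    constructor
    · rintro ⟨hs, hAp⟩
      refine ⟨⟨?_, hs⟩, fun t ht hts => hAp t ht.1.2 hts.symm⟩
      by_contra! hle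
      exact hAp (s - x) (hN _ (by omega)) (by omega)
    · rintro ⟨⟨hsN, hs⟩, hI⟩
      exact ⟨hs, fun t ht hst => hI t ⟨⟨by omega, ht⟩, hst ▸ hs⟩ hst.symm⟩
  have hB : B = G ∪ Ico N (N + x) := by
    ext s
    simp only [B, G, mem_union, mem_filter, mem_range, mem_Ico]
    constructor
    · rintro ⟨hs, hsΓ⟩
      by_cases hsN : s < N
      · exact Or.inl ⟨hsN, hsΓ⟩
      · exact Or.inr ⟨by omega, hs⟩
    · rintro (⟨hs, hsΓ⟩ | ⟨hNs, hs⟩)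
      · exact ⟨by omega, hsΓ⟩
      · exact ⟨hs, hN s hNs⟩
  have hcardB : #B = #G + x := by
    rw [hB, card_union_of_disjoint, Nat.card_Ico, Nat.add_sub_cancel_left]
    exact disjoint_left.2 fun s hs hs' => by
      simp only [G, mem_filter, mem_range] at hs
      simp only [mem_Ico] at hs'
      omega
  have hIB : I ⊆ B := by
    intro s hs
    simp only [I, G, B, mem_image, mem_filter, mem_range] at hs ⊢
    obtain ⟨t, ⟨⟨ht, -⟩, htx⟩, rfl⟩ := hs
    exact ⟨by omega, htx⟩
  have hsplit : #{s ∈ G | s + x ∈ Γ} + #(exitSet Γ N x) = #G := by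
    rw [exitSet, ← filter_filter]
    convert card_filter_add_card_filter_not (s := G) (fun s => s + x ∈ Γ)
  rw [hAp, Set.ncard_coe_finset, card_sdiff_of_subset hIB, hcardB,
    card_image_of_injective _ (add_left_injective x)]
  omega

namespace GST

variable {q : ℕ}

lemma cGS_eq (q n : ℕ) : cGS q n = q ^ n - q ^ ((n + 1) / 2) := by
  unfold cGS
  split_ifs with h
  · rfl
  · rw [show (n + 1) / 2 = n / 2 by omega]

theorem mem_iff (hq : 0 < q) {n : ℕ} (hn : 1 ≤ n) {s : ℕ} :
    s ∈ GST q n ↔ ∃ j < n, q ^ j ∣ s ∧ q ^ n ≤ s + q ^ ((n + j + 1) / 2) := by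
  induction n, hn using Nat.le_induction generalizing s with
  | base => simp [GST]
  | succ n hn ih =>
    obtain ⟨n, rfl⟩ : ∃ m, n = m + 1 := ⟨n - 1, by omega⟩
    have hcond : cGS q (n + 2) ≤ s ↔ q ^ (n + 2) ≤ s + q ^ ((n + 2 + 0 + 1) / 2) := by
      have : q ^ ((n + 2 + 1) / 2) ≤ q ^ (n + 2) := Nat.pow_le_pow_right hq (by omega)
      rw [cGS_eq, add_zero]
      omega
    have hscale : ∀ s' j, q ^ (n + 2) ≤ q * s' + q ^ ((n + 2 + (j + 1) + 1) / 2) ↔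
        q ^ (n + 1) ≤ s' + q ^ ((n + 1 + j + 1) / 2) := fun s' j => by
      rw [show (n + 2 + (j + 1) + 1) / 2 = (n + 1 + j + 1) / 2 + 1 by omega,
        pow_succ' q (n + 1), pow_succ' q ((n + 1 + j + 1) / 2), ← mul_add]
      exact Nat.mul_le_mul_left_iff hq
    have hmul : s ∈ (fun x => q * x) '' GST q (n + 1) ↔
        ∃ j < n + 1, q ^ (j + 1) ∣ s ∧ q ^ (n + 2) ≤ s + q ^ ((n + 2 + (j + 1) + 1) / 2) := by
      constructor
      · rintro ⟨s, hs, rfl⟩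
        obtain ⟨j, hj, hdvd, hle⟩ := ih.1 hs
        exact ⟨j, hj, by rw [pow_succ']; exact mul_dvd_mul_left q hdvd, (hscale s j).2 hle⟩
      · rintro ⟨j, hj, hdvd, hle⟩
        obtain ⟨s, rfl⟩ := (dvd_pow_self q j.succ_ne_zero).trans hdvd
        rw [pow_succ'] at hdvd
        exact ⟨s, ih.2 ⟨j, hj, (Nat.mul_dvd_mul_iff_left hq).1 hdvd, (hscale s j).1 hle⟩, rfl⟩
    change s ∈ (fun x => q * x) '' GST q (n + 1) ∪ {x | cGS q (n + 2) ≤ x} ↔ _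
    rw [Set.mem_union, hmul, Set.mem_ofPred_eq, hcond, Nat.exists_lt_succ_left (n := n + 1)]
    simp only [pow_zero, one_dvd, true_and]
    exact or_comm

lemma mem_of_pow_le (hq : 0 < q) {n s : ℕ} (hs : q ^ n ≤ s) : s ∈ GST q n := by
  rcases Nat.eq_zero_or_pos n with rfl | hn
  · trivial
  · exact (mem_iff hq hn).2 ⟨0, hn, one_dvd s, le_add_right hs⟩

theorem pow_sub_mem_iff (hq : 0 < q) {n t : ℕ} (hn : 1 ≤ n) (ht : t ≤ q ^ n) :
    q ^ n - t ∈ GST q n ↔ ∃ j < n, q ^ j ∣ t ∧ t ≤ q ^ ((n + j + 1) / 2) := by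
  rw [mem_iff hq hn]
  refine exists_congr fun j => and_congr_right fun hj => and_congr ?_ (by omega)
  rw [← Nat.dvd_sub_iff_right ht (pow_dvd_pow q hj.le)]

/-- For `m > 1` and `i = ⌈log_q m⌉`, the `m`-th distance `qⁿ - s` of an exit-set element `s`:
the multiples of `q^(n+1-2i)` in `(q^(n-i), q^(n+1-i)]`. -/
def exitDist (q n m : ℕ) : ℕ := m * q ^ (n + 1 - 2 * Nat.clog q m)

lemma exitDist_bounds (hq : 1 < q) {n m : ℕ} (hm : 1 < m) (hmn : 2 * Nat.clog q m ≤ n) :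
    q ^ (n - Nat.clog q m) + q ^ (n + 1 - 2 * Nat.clog q m) ≤ exitDist q n m ∧
      exitDist q n m ≤ q ^ (n + 1 - Nat.clog q m) := by
  set i := Nat.clog q m
  have hi : 0 < i := Nat.clog_pos hq hm
  have hlo : q ^ (i - 1) < m := Nat.pow_pred_clog_lt_self hq hm
  have hhi : m ≤ q ^ i := Nat.le_pow_clog hq m
  constructor
  · calc q ^ (n - i) + q ^ (n + 1 - 2 * i) = (q ^ (i - 1) + 1) * q ^ (n + 1 - 2 * i) := by
          rw [add_mul, one_mul, ← pow_add, show i - 1 + (n + 1 - 2 * i) = n - i by omega]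
      _ ≤ exitDist q n m := Nat.mul_le_mul_right _ hlo
  · calc exitDist q n m ≤ q ^ i * q ^ (n + 1 - 2 * i) := Nat.mul_le_mul_right _ hhi
      _ = q ^ (n + 1 - i) := by rw [← pow_add, show i + (n + 1 - 2 * i) = n + 1 - i by omega]

lemma exitDist_le_pow (hq : 1 < q) {n m : ℕ} (hm : 1 < m) (hmn : 2 * Nat.clog q m ≤ n) :
    exitDist q n m ≤ q ^ n :=
  (exitDist_bounds hq hm hmn).2.trans
    (pow_le_pow_right₀ hq.le (by have := Nat.clog_pos hq hm; omega))

theorem pow_sub_exitDist_mem_exitSet (hq : 1 < q) {n x b m : ℕ} (hxb : q ^ b ≤ x)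
    (hxb' : x < q ^ (b + 1)) (hm : 1 < m) (hmK : m ≤ q ^ ((n - b) / 2)) :
    q ^ n - exitDist q n m ∈ exitSet (GST q n) (q ^ n) x := by
  have hi : 0 < Nat.clog q m := Nat.clog_pos hq hm
  have hiK : Nat.clog q m ≤ (n - b) / 2 := (Nat.clog_le_iff_le_pow hq).2 hmK
  have hn : 1 ≤ n := by omega
  obtain ⟨hlo, hhi⟩ := exitDist_bounds hq (n := n) hm (by omega)
  set i := Nat.clog q m
  set t := exitDist q n m
  set e := n + 1 - 2 * i
  have hte : q ^ e ∣ t := dvd_mul_left _ _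
  have htn : t ≤ q ^ n := exitDist_le_pow hq hm (by omega)
  have hxe : x < q ^ e := hxb'.trans_le (Nat.pow_le_pow_right hq.le (by omega))
  have hpos : 0 < q ^ (n - i) := by positivity
  simp only [exitSet, mem_filter, mem_range]
  refine ⟨by omega, (pow_sub_mem_iff hq.le hn htn).2 ⟨e, by omega, hte, ?_⟩, ?_⟩
  · rwa [show (n + e + 1) / 2 = n + 1 - i by omega]
  rw [show q ^ n - t + x = q ^ n - (t - x) by omega, pow_sub_mem_iff hq.le hn (by omega)]
  -- a witness `j ≤ b` is too small for `t - x > q^(n-i)`; one with `j > b` forces `q^(b+1) ∣ x`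
  rintro ⟨j, hj, hdvd, hle⟩
  rcases le_or_gt j b with hjb | hjb
  · have : q ^ ((n + j + 1) / 2) ≤ q ^ (n - i) := Nat.pow_le_pow_right hq.le (by omega)
    omega
  · have hdvd_x : q ^ (b + 1) ∣ x := by
      have h₁ : q ^ (b + 1) ∣ t := (pow_dvd_pow q (by omega)).trans hte
      have h₂ : q ^ (b + 1) ∣ t - x := (pow_dvd_pow q hjb).trans hdvd
      simpa [Nat.sub_sub_self (by omega : x ≤ t)] using Nat.dvd_sub h₁ h₂
    have : 0 < q ^ b := by positivity
    exact absurd (Nat.le_of_dvd (by omega) hdvd_x) (by omega)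

theorem exists_exitDist_eq (hq : 1 < q) {n K t j : ℕ} (hK : 2 * K ≤ n) (hj : j < n)
    (ht : q ^ (n - K) < t) (hdvd : q ^ j ∣ t) (htj : t ≤ q ^ ((n + j + 1) / 2)) :
    ∃ m ∈ Ioc 1 (q ^ K), exitDist q n m = t := by
  have ht1 : 1 < t := (Nat.one_le_pow _ _ (by omega)).trans_lt ht
  have hc_le : Nat.clog q t ≤ (n + j + 1) / 2 := (Nat.clog_le_iff_le_pow hq).2 htj
  have hc_gt : n - K < Nat.clog q t := (Nat.lt_clog_iff_pow_lt hq).2 ht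
  have hlo := Nat.pow_pred_clog_lt_self hq ht1
  have hhi := Nat.le_pow_clog hq t
  set c := Nat.clog q t
  set i := n + 1 - c with hi
  clear_value c i
  obtain ⟨m, rfl⟩ : q ^ (n + 1 - 2 * i) ∣ t := (pow_dvd_pow q (by omega)).trans hdvd
  rw [Nat.pred_eq_sub_one, show c - 1 = n + 1 - 2 * i + (i - 1) by omega, pow_add] at hlo
  rw [show c = n + 1 - 2 * i + (i - 1 + 1) by omega, pow_add] at hhi
  have hpos : 0 < q ^ (n + 1 - 2 * i) := by positivity
  have hm_lo := lt_of_mul_lt_mul_left hlo hpos.le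
  have hm_hi := le_of_mul_le_mul_left hhi hpos
  have hclog : Nat.clog q m = i := by
    rw [Nat.clog_eq_succ_of_pow_lt_of_le hq hm_lo hm_hi]
    omega
  refine ⟨m, mem_Ioc.2 ⟨?_, hm_hi.trans (Nat.pow_le_pow_right hq.le (by omega))⟩, ?_⟩
  · exact (Nat.one_le_pow _ _ (by omega)).trans_lt hm_lo
  · rw [exitDist, hclog, mul_comm]

lemma clog_exitDist (hq : 1 < q) {n m : ℕ} (hm : 1 < m) (hmn : 2 * Nat.clog q m ≤ n) :
    Nat.clog q (exitDist q n m) = n + 1 - Nat.clog q m := by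
  have hi : 0 < Nat.clog q m := Nat.clog_pos hq hm
  obtain ⟨hlo, hhi⟩ := exitDist_bounds hq hm hmn
  have : 0 < q ^ (n + 1 - 2 * Nat.clog q m) := by positivity
  rw [Nat.clog_eq_succ_of_pow_lt_of_le hq (i := n - Nat.clog q m) (by omega)
    (by rwa [show n - Nat.clog q m + 1 = n + 1 - Nat.clog q m by omega])]
  omega

lemma exitDist_injOn (hq : 1 < q) (n : ℕ) :
    Set.InjOn (exitDist q n) {m | 1 < m ∧ 2 * Nat.clog q m ≤ n} := by
  rintro m₁ ⟨hm₁, hn₁⟩ m₂ ⟨hm₂, hn₂⟩ h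
  have hclog : Nat.clog q m₁ = Nat.clog q m₂ := by
    have := congrArg (Nat.clog q) h
    rw [clog_exitDist hq hm₁ hn₁, clog_exitDist hq hm₂ hn₂] at this
    omega
  rw [exitDist, exitDist, hclog] at h
  exact Nat.eq_of_mul_eq_mul_right (by positivity) h

theorem card_exitSet_ge (hq : 1 < q) {n x b : ℕ} (hxb : q ^ b ≤ x) (hxb' : x < q ^ (b + 1)) :
    q ^ ((n - b) / 2) - 1 ≤ #(exitSet (GST q n) (q ^ n) x) := by
  set K := (n - b) / 2
  have hK : ∀ m ∈ Ioc 1 (q ^ K), 1 < m ∧ 2 * Nat.clog q m ≤ n := fun m hm => by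
    have := (Nat.clog_le_iff_le_pow hq).2 (mem_Ioc.1 hm).2
    exact ⟨(mem_Ioc.1 hm).1, by omega⟩
  have hinj : Set.InjOn (fun m => q ^ n - exitDist q n m) (Ioc 1 (q ^ K) : Set ℕ) := by
    intro m₁ hm₁ m₂ hm₂ h
    obtain ⟨hm₁, hn₁⟩ := hK m₁ hm₁
    obtain ⟨hm₂, hn₂⟩ := hK m₂ hm₂
    have h₁ := exitDist_le_pow hq hm₁ hn₁
    have h₂ := exitDist_le_pow hq hm₂ hn₂
    exact exitDist_injOn hq n ⟨hm₁, hn₁⟩ ⟨hm₂, hn₂⟩ (by simp only at h; omega)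
  have hmaps : Set.MapsTo (fun m => q ^ n - exitDist q n m) (Ioc 1 (q ^ K) : Set ℕ)
      (exitSet (GST q n) (q ^ n) x) := fun m hm =>
    pow_sub_exitDist_mem_exitSet hq hxb hxb' (mem_Ioc.1 hm).1 (mem_Ioc.1 hm).2
  simpa using card_le_card_of_injOn _ hmaps hinj

theorem card_exitSet_pow_le (hq : 1 < q) {n j : ℕ} (hj : j < n) :
    #(exitSet (GST q n) (q ^ n) (q ^ j)) ≤ q ^ ((n - j) / 2) - 1 := by
  suffices exitSet (GST q n) (q ^ n) (q ^ j) ⊆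
      (Ioc 1 (q ^ ((n - j) / 2))).image (fun m => q ^ n - exitDist q n m) by
    simpa using (card_le_card this).trans card_image_le
  intro s hs
  simp only [exitSet, mem_filter, mem_range] at hs
  obtain ⟨hsn, hs, hsj⟩ := hs
  have hn : 1 ≤ n := by omega
  obtain ⟨k, hk, hkt, htk⟩ := (pow_sub_mem_iff hq.le hn (t := q ^ n - s) (by omega)).1
    (by rwa [Nat.sub_sub_self hsn.le])
  have hsjn : s + q ^ j < q ^ n := by
    by_contra! h
    exact hsj (mem_of_pow_le hq.le h)
  rw [show s + q ^ j = q ^ n - (q ^ n - s - q ^ j) by omega,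
    pow_sub_mem_iff hq.le hn (by omega)] at hsj
  simp only [not_exists, not_and, not_le] at hsj
  -- `s + q^j ∉ Γₙ` kills the witness `k` of `s` unless `j < k`, and then fails at `j` itself
  have hjk : j < k := by
    by_contra! hkj
    exact (hsj k hk (Nat.dvd_sub hkt (pow_dvd_pow q hkj))).not_ge (by omega)
  have hgap := hsj j hj (Nat.dvd_sub ((pow_dvd_pow q hjk.le).trans hkt) dvd_rfl)
  obtain ⟨m, hm, hmt⟩ := exists_exitDist_eq hq (K := (n - j) / 2) (by omega) hk
    (by rw [show n - (n - j) / 2 = (n + j + 1) / 2 by omega]; omega) hkt htk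
  exact mem_image.2 ⟨m, hm, by omega⟩

theorem ncard_Ap_eq (hq : 1 < q) (n x : ℕ) :
    (Ap (GST q n) x).ncard = x + #(exitSet (GST q n) (q ^ n) x) :=
  ncard_Ap_eq_add_card_exitSet (fun _ => mem_of_pow_le hq.le) x

theorem ncard_Ap_pow (hq : 1 < q) {n j : ℕ} (hj : j < n) :
    (Ap (GST q n) (q ^ j)).ncard = q ^ j + (q ^ ((n - j) / 2) - 1) := by
  rw [ncard_Ap_eq hq]
  have := card_exitSet_ge hq (n := n) (b := j) le_rfl (Nat.pow_lt_pow_succ hq)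
  have := card_exitSet_pow_le hq hj
  omega

theorem ncard_Ap_ge (hq : 1 < q) (n : ℕ) {x : ℕ} (hx : x ≠ 0) :
    q ^ Nat.log q x + (q ^ ((n - Nat.log q x) / 2) - 1) ≤ (Ap (GST q n) x).ncard := by
  rw [ncard_Ap_eq hq]
  have := Nat.pow_log_le_self q hx
  have := card_exitSet_ge hq (n := n) this (Nat.lt_pow_succ_log_self hq x)
  omega

end GST

def fengRaoCandidates (q n : ℕ) : Set ℕ :=
  {q ^ (n / 2), q ^ (n - 1)} ∪
    {v | ∃ k, 1 ≤ k ∧ k ≤ n / 2 - 1 ∧ v = (q ^ k - 1) + q ^ (n - 1 - 2 * k)}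

section Candidates

variable {q n : ℕ}

lemma exists_eq_of_mem_fengRaoCandidates (hq : 0 < q) (hn : 1 ≤ n) {w : ℕ}
    (hw : w ∈ fengRaoCandidates q n) : ∃ j < n, w = q ^ j + (q ^ ((n - j) / 2) - 1) := by
  have hpos : ∀ a, 0 < q ^ a := fun a => by positivity
  rcases hw with (rfl | rfl) | ⟨k, hk, hkn, rfl⟩
  · refine ⟨0, hn, ?_⟩
    have := hpos (n / 2)
    simp only [pow_zero, Nat.sub_zero]
    omega
  · exact ⟨n - 1, by omega, by rw [show (n - (n - 1)) / 2 = 0 by omega]; simp⟩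
  · exact ⟨n - 1 - 2 * k, by omega, by
      rw [show (n - (n - 1 - 2 * k)) / 2 = k by omega, add_comm]⟩

lemma mem_fengRaoCandidates (hq : 0 < q) {j : ℕ} (hj : j < n) (hjn : j = 0 ∨ Even (n - 1 - j)) :
    q ^ j + (q ^ ((n - j) / 2) - 1) ∈ fengRaoCandidates q n := by
  have hpos : ∀ a, 0 < q ^ a := fun a => by positivity
  by_cases hj0 : j = 0
  · subst hj0
    left; left
    have := hpos (n / 2)
    simp only [pow_zero, Nat.sub_zero]
    omega
  obtain ⟨k, hk⟩ := hjn.resolve_left hj0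
  rcases Nat.eq_zero_or_pos k with rfl | hk0
  · left; right
    rw [show j = n - 1 by omega, show (n - (n - 1)) / 2 = 0 by omega]
    simp
  · right
    refine ⟨k, hk0, by omega, ?_⟩
    rw [show (n - j) / 2 = k by omega, show j = n - 1 - 2 * k by omega, add_comm]

lemma exists_mem_fengRaoCandidates_le (hq : 0 < q) {j : ℕ} (hj : j < n) :
    ∃ w ∈ fengRaoCandidates q n, w ≤ q ^ j + (q ^ ((n - j) / 2) - 1) := by
  by_cases hjn : j = 0 ∨ Even (n - 1 - j)
  · exact ⟨_, mem_fengRaoCandidates hq hj hjn, le_rfl⟩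
  · simp only [not_or] at hjn
    refine ⟨_, mem_fengRaoCandidates (j := j - 1) hq (by omega) (Or.inr ?_), ?_⟩
    · rw [show n - 1 - (j - 1) = (n - 1 - j) + 1 by omega]
      exact (Nat.not_even_iff_odd.1 hjn.2).add_one
    · have hodd := Nat.not_even_iff_odd.1 hjn.2
      rw [show (n - (j - 1)) / 2 = (n - j) / 2 by obtain ⟨k, hk⟩ := hodd; omega]
      have := Nat.pow_le_pow_right hq (Nat.sub_le j 1)
      omega

end Candidates

/-- The minimum of #Ap(Γₙ,x) over 1 ≤ x ≤ q^(n-1) (the second Feng–Rao number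
E(Γₙ,2)) equals the minimum of q^⌊n/2⌋, q^(n-1), and (q^k - 1) + q^(n-1-2k)
for 1 ≤ k ≤ ⌊n/2⌋ - 1. -/
theorem stmt14 (q : ℕ) (hq : 2 ≤ q) (n : ℕ) (hn : 2 ≤ n) :
    sInf {v | ∃ x, 1 ≤ x ∧ x ≤ q ^ (n - 1) ∧ v = (Ap (GST q n) x).ncard}
      = sInf ({q ^ (n / 2), q ^ (n - 1)}
          ∪ {v | ∃ k, 1 ≤ k ∧ k ≤ n / 2 - 1 ∧ v = (q ^ k - 1) + q ^ (n - 1 - 2 * k)}) := by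
  refine csInf_eq_csInf_of_forall_exists_le ?_ fun w hw => ?_
  · rintro _ ⟨x, hx, hxn, rfl⟩
    have hlog : Nat.log q x < n := by
      refine Nat.log_lt_of_lt_pow (by omega) (hxn.trans_lt ?_)
      exact Nat.pow_lt_pow_right hq (by omega)
    obtain ⟨w, hw, hle⟩ := exists_mem_fengRaoCandidates_le (q := q) (by omega) hlog
    exact ⟨w, hw, hle.trans (GST.ncard_Ap_ge hq n (by omega))⟩
  · obtain ⟨j, hj, rfl⟩ := exists_eq_of_mem_fengRaoCandidates (by omega) (by omega) hw
    exact ⟨_, ⟨q ^ j, Nat.one_le_pow _ _ (by omega), pow_le_pow_right₀ (by omega) (by omega),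
      (GST.ncard_Ap_pow hq hj).symm⟩, le_rfl⟩
end

section
/- For every n ≥ 6, the minimum of #Ap(Γₙ, x) over x ∈ {1, …, q^{n−1}} equals q^{⌈(n−1)/3⌉} + q^{n−1−2⌈(n−1)/3⌉} − 1. (This minimum is the second Feng–Rao number E(Γₙ, 2).) -/
open Finset


lemma cGS_eq (q n : ℕ) : cGS q n = q ^ n - q ^ ((n + 1) / 2) := by
  unfold cGS; split
  · rfl
  · rename_i h; congr 2; omega

lemma mem_GST (q : ℕ) (hq : 1 ≤ q) : ∀ n, 1 ≤ n → ∀ y : ℕ,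
    (y ∈ GST q n ↔ ∃ v, v < n ∧ q ^ v ∣ y ∧ q ^ n ≤ y + q ^ ((n + v + 1) / 2)) := by
  intro n
  induction n with
  | zero => omega
  | succ m ih =>
    match m with
    | 0 =>
      intro _ y
      simp only [GST, Set.mem_univ, true_iff]
      exact ⟨0, by omega, one_dvd _, by simpa using Nat.le_add_left _ _⟩
    | Nat.succ m =>
      intro _ y
      have hrec : GST q (m + 2) = (fun x => q * x) '' GST q (m + 1) ∪ {x | cGS q (m + 2) ≤ x} := rfl
      show y ∈ GST q (m + 2) ↔ ∃ v, v < m + 2 ∧ q ^ v ∣ y ∧ q ^ (m+2) ≤ y + q ^ ((m + 2 + v + 1) / 2)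
      rw [hrec]
      constructor
      · rintro (⟨z, hz, rfl⟩ | hy)
        · obtain ⟨v, hv, hd, hle⟩ := (ih (by omega) z).1 hz
          have hle' : q ^ (m+1) ≤ z + q ^ ((m + 1 + v + 1) / 2) := hle
          refine ⟨v + 1, by omega, by simpa [pow_succ'] using mul_dvd_mul_left q hd, ?_⟩
          have he : (m + 2 + (v + 1) + 1) / 2 = (m + 1 + v + 1) / 2 + 1 := by omega
          show q ^ (m + 2) ≤ q * z + q ^ ((m + 2 + (v + 1) + 1) / 2)
          calc q ^ (m+2) = q * q^(m+1) := by ring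
            _ ≤ q * (z + q^((m+1+v+1)/2)) := Nat.mul_le_mul_left q hle'
            _ = q * z + q^((m+1+v+1)/2 + 1) := by ring
            _ = q * z + q^((m+2+(v+1)+1)/2) := by rw [he]
        · refine ⟨0, by omega, one_dvd _, ?_⟩
          have hc : q ^ (m+2) - q ^ ((m+2+1)/2) ≤ y := cGS_eq q (m+2) ▸ hy.out
          have hp : q ^ ((m+2+1)/2) ≤ q ^ (m+2) := Nat.pow_le_pow_right hq (by omega)
          show q ^ (m + 2) ≤ y + q ^ ((m + 2 + 0 + 1) / 2)
          have he : (m + 2 + 0 + 1) / 2 = (m+2+1)/2 := by omega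
          rw [he]; omega
      · rintro ⟨v, hv, hd, hle⟩
        match v with
        | 0 =>
          right
          show cGS q (m + 2) ≤ y
          rw [cGS_eq]
          have hle' : q ^ (m+2) ≤ y + q ^ ((m + 2 + 1) / 2) := by
            have he : (m + 2 + 0 + 1) / 2 = (m+2+1)/2 := by omega
            rw [← he]; exact hle
          omega
        | w + 1 =>
          left
          obtain ⟨u, rfl⟩ := hd
          refine ⟨q ^ w * u, ?_, by ring⟩
          rw [ih (by omega)]
          refine ⟨w, by omega, Dvd.intro u rfl, ?_⟩
          show q ^ (m+1) ≤ q ^ w * u + q ^ ((m + 1 + w + 1) / 2)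
          have he : (m + 2 + (w + 1) + 1) / 2 = (m + 1 + w + 1) / 2 + 1 := by omega
          have hle' : q ^ (m+2) ≤ q ^ (w+1) * u + q ^ ((m + 1 + w + 1) / 2 + 1) := by
            rw [← he]; exact hle
          refine Nat.le_of_mul_le_mul_left ?_ (show 0 < q by omega)
          calc q * q ^ (m+1) = q ^ (m+2) := by ring
            _ ≤ q ^ (w+1) * u + q ^ ((m + 1 + w + 1) / 2 + 1) := hle'
            _ = q * (q ^ w * u + q ^ ((m + 1 + w + 1) / 2)) := by ring

lemma conductor_mem (q : ℕ) (hq : 1 ≤ q) (n : ℕ) (hn : 1 ≤ n) {y : ℕ} (hy : cGS q n ≤ y) :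
    y ∈ GST q n := by
  rw [mem_GST q hq n hn]
  rw [cGS_eq] at hy
  refine ⟨0, by omega, one_dvd _, ?_⟩
  have he : (n + 0 + 1) / 2 = (n+1)/2 := by omega
  have hp : q ^ ((n+1)/2) ≤ q ^ n := Nat.pow_le_pow_right hq (by omega)
  rw [he]; omega


open Finset

lemma Ioc_filter_dvd_card (d A B : ℕ) (hAB : A ≤ B) :
    ((Finset.Ioc A B).filter (fun s => d ∣ s)).card = B / d - A / d := by
  have hun : (Ioc 0 A).filter (fun s => d ∣ s) ∪ (Ioc A B).filter (fun s => d ∣ s)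
      = (Ioc 0 B).filter (fun s => d ∣ s) := by
    rw [← filter_union, Finset.Ioc_union_Ioc_eq_Ioc (Nat.zero_le A) hAB]
  have hdisj : Disjoint ((Ioc 0 A).filter (fun s => d ∣ s))
      ((Ioc A B).filter (fun s => d ∣ s)) := by
    rw [disjoint_left]
    intro s hs hs'
    simp only [mem_filter, mem_Ioc] at hs hs'
    omega
  have h1 := Nat.Ioc_filter_dvd_card_eq_div B d
  have h2 := Nat.Ioc_filter_dvd_card_eq_div A d
  have h3 := card_union_of_disjoint hdisj
  rw [hun] at h3
  have h4 : A / d ≤ B / d := Nat.div_le_div_right hAB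
  omega

lemma exists_k (q : ℕ) (hq : 2 ≤ q) (n : ℕ) : ∀ b, 1 ≤ b → b ≤ n → ∀ s : ℕ,
    q ^ (n - b) < s → s ≤ q ^ n →
    ∃ k, 1 ≤ k ∧ k ≤ b ∧ q ^ (n - k) < s ∧ s ≤ q ^ (n - k + 1) := by
  intro b
  induction b with
  | zero => omega
  | succ b ih =>
    intro _ hbn s hs1 hs2
    rcases Nat.eq_zero_or_pos b with rfl | hb
    · refine ⟨1, le_refl _, le_refl _, hs1, ?_⟩
      have : n - 1 + 1 = n := by omega
      rw [this]; exact hs2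
    · by_cases h : q ^ (n - b) < s
      · obtain ⟨k, h1, h2, h3, h4⟩ := ih hb (by omega) s h hs2
        exact ⟨k, h1, by omega, h3, h4⟩
      · push_neg at h
        refine ⟨b + 1, by omega, le_refl _, hs1, ?_⟩
        have : n - (b+1) + 1 = n - b := by omega
        rw [this]; exact h

lemma sum_telescope_pow (q : ℕ) (hq : 2 ≤ q) : ∀ b : ℕ,
    (∑ k ∈ Finset.Icc 1 b, (q ^ k - q ^ (k-1))) = q ^ b - 1 := by
  intro b
  induction b with
  | zero => simp
  | succ b ih =>
    rw [Finset.sum_Icc_succ_top (by omega), ih]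
    have h1 : q ^ b ≤ q ^ (b+1) := Nat.pow_le_pow_right (by omega) (by omega)
    have h2 : 1 ≤ q ^ b := Nat.one_le_pow _ _ (by omega)
    have h3 : (b+1) - 1 = b := by omega
    rw [h3]
    omega

open scoped Classical in
lemma count_exact (q : ℕ) (hq : 2 ≤ q) (n a : ℕ) (ha : a + 2 ≤ n) :
    ((Finset.range (q ^ n - q ^ ((n + a + 1)/2) - q ^ a)).filter
      (fun t => q ^ (a+1) ∣ t ∧ t ∈ GST q n)).card = q ^ ((n - a)/2) - 1 := by
  have hq1 : 1 ≤ q := by omega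
  have hn1 : 1 ≤ n := by omega
  set b := (n - a) / 2 with hbdef
  have hb1 : 1 ≤ b := by omega
  have hab : a + 2 * b ≤ n := by omega
  have hbn : b ≤ n := by omega
  have hE : (n + a + 1) / 2 = n - b := by omega
  rw [hE]
  set V : ℕ → Finset ℕ :=
    fun k => (Finset.Ioc (q^(n-k)) (q^(n-k+1))).filter (fun s => q^(n+1-2*k) ∣ s) with hVdef
  set W := (Finset.range (q ^ n - q ^ (n - b) - q ^ a)).filter
      (fun t => q ^ (a+1) ∣ t ∧ t ∈ GST q n) with hWdef
  have hpb : q ^ (n-b) ≤ q ^ n := Nat.pow_le_pow_right hq1 (by omega)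
  have hpa : q ^ a ≤ q ^ (n-b) := Nat.pow_le_pow_right hq1 (by omega)
  have hpa0 : 1 ≤ q ^ a := Nat.one_le_pow _ _ (by omega)
  have himg : W.image (fun t => q ^ n - t) = (Finset.Icc 1 b).biUnion V := by
    ext s
    simp only [hWdef, hVdef, mem_image, mem_biUnion, mem_filter, mem_range, mem_Ioc, mem_Icc]
    constructor
    · rintro ⟨t, ⟨htr, hdvd, htΓ⟩, hst⟩
      have hs_gt : q ^ (n-b) < s := by omega
      have hs_le : s ≤ q ^ n := by omega
      obtain ⟨k, hk1, hk2, hk3, hk4⟩ := exists_k q hq n b hb1 hbn s hs_gt hs_le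
      refine ⟨k, ⟨hk1, hk2⟩, ⟨hk3, hk4⟩, ?_⟩
      obtain ⟨v, hv, hd, hi⟩ := (mem_GST q hq1 n hn1 t).1 htΓ
      have hsv : s ≤ q ^ ((n+v+1)/2) := by omega
      have hlt : q ^ (n-k) < q ^ ((n+v+1)/2) := lt_of_lt_of_le hk3 hsv
      have hexp : n - k < (n+v+1)/2 := (Nat.pow_lt_pow_iff_right (by omega)).1 hlt
      have hvk : n + 1 ≤ v + 2*k := by omega
      have hdd : q ^ (n+1-2*k) ∣ t := dvd_trans (pow_dvd_pow q (by omega)) hd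
      have hdn : q ^ (n+1-2*k) ∣ q ^ n := pow_dvd_pow q (by omega)
      exact hst ▸ Nat.dvd_sub hdn hdd
    · rintro ⟨k, ⟨hk1, hk2⟩, ⟨hs1, hs2⟩, hsd⟩
      have hkn : k ≤ n := by omega
      have hp1 : q ^ (n-k+1) ≤ q ^ n := Nat.pow_le_pow_right hq1 (by omega)
      have hsn : s ≤ q ^ n := le_trans hs2 hp1
      have hdt : q ^ (n+1-2*k) ∣ q ^ n - s :=
        Nat.dvd_sub (pow_dvd_pow q (by omega)) hsd
      refine ⟨q ^ n - s, ⟨?_, ?_, ?_⟩, by omega⟩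
      · -- range bound
        rcases Nat.lt_or_ge k b with hkb | hkb
        · have h1 : q ^ (n-b+1) ≤ q ^ (n-k) := Nat.pow_le_pow_right hq1 (by omega)
          have h2 : q ^ (n-b+1) = q ^ (n-b) * q := pow_succ q (n-b)
          have h3 : q ^ (n-b) * 2 ≤ q ^ (n-b) * q := Nat.mul_le_mul_left _ hq
          omega
        · have hkb' : k = b := by omega
          subst hkb'
          have hmb : q ^ (n+1-2*b) ∣ q ^ (n-b) := pow_dvd_pow q (by omega)
          have hdiff : q ^ (n+1-2*b) ∣ s - q ^ (n-b) := Nat.dvd_sub hsd hmb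
          have hpos : 0 < s - q ^ (n-b) := by omega
          have hge : q ^ (n+1-2*b) ≤ s - q ^ (n-b) := Nat.le_of_dvd hpos hdiff
          have hm1 : q ^ (a+1) ≤ q ^ (n+1-2*b) := Nat.pow_le_pow_right hq1 (by omega)
          have hm2 : q ^ (a+1) = q ^ a * q := pow_succ q a
          have hm3 : q ^ a * 2 ≤ q ^ a * q := Nat.mul_le_mul_left _ hq
          omega
      · exact dvd_trans (pow_dvd_pow q (by omega)) hdt
      · rw [mem_GST q hq1 n hn1]
        refine ⟨n+1-2*k, by omega, hdt, ?_⟩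
        have hexp : (n + (n+1-2*k) + 1)/2 = n - k + 1 := by omega
        rw [hexp]
        omega
  have hinj : Set.InjOn (fun t => q ^ n - t) ↑W := by
    intro t1 h1 t2 h2 heq
    simp only [hWdef, coe_filter, Set.mem_setOf_eq, mem_range] at h1 h2
    have heq' : q ^ n - t1 = q ^ n - t2 := heq
    omega
  have hdisjkey : ∀ k k', k < k' → k' ≤ b → Disjoint (V k) (V k') := by
    intro k k' hlt hle
    rw [disjoint_left]
    intro s hs hs'
    simp only [hVdef, mem_filter, mem_Ioc] at hs hs'
    have : q ^ (n-k'+1) ≤ q ^ (n-k) := Nat.pow_le_pow_right hq1 (by omega)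
    omega
  have hdisj : ∀ k ∈ Finset.Icc 1 b, ∀ k' ∈ Finset.Icc 1 b, k ≠ k' → Disjoint (V k) (V k') := by
    intro k hk k' hk' hne
    simp only [mem_Icc] at hk hk'
    rcases lt_or_gt_of_ne hne with h | h
    · exact hdisjkey k k' h hk'.2
    · exact (hdisjkey k' k h hk.2).symm
  have hcV : ∀ k ∈ Finset.Icc 1 b, (V k).card = q ^ k - q ^ (k-1) := by
    intro k hk
    simp only [mem_Icc] at hk
    simp only [hVdef]
    rw [Ioc_filter_dvd_card (q^(n+1-2*k)) _ _ (Nat.pow_le_pow_right hq1 (by omega))]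
    have e1 : q ^ (n-k+1) / q ^ (n+1-2*k) = q ^ k := by
      rw [Nat.pow_div (by omega) (by omega)]
      congr 1
      omega
    have e2 : q ^ (n-k) / q ^ (n+1-2*k) = q ^ (k-1) := by
      rw [Nat.pow_div (by omega) (by omega)]
      congr 1
      omega
    rw [e1, e2]
  calc W.card = (W.image (fun t => q ^ n - t)).card := (Finset.card_image_of_injOn hinj).symm
    _ = ((Finset.Icc 1 b).biUnion V).card := by rw [himg]
    _ = ∑ k ∈ Finset.Icc 1 b, (V k).card := Finset.card_biUnion hdisj
    _ = ∑ k ∈ Finset.Icc 1 b, (q ^ k - q ^ (k-1)) := Finset.sum_congr rfl hcV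
    _ = q ^ b - 1 := sum_telescope_pow q hq b

open scoped Classical in
lemma apery_card (Γ : Set ℕ) (c : ℕ) (hcond : ∀ y, c ≤ y → y ∈ Γ) (x : ℕ) (hx : 1 ≤ x) :
    (Ap Γ x).ncard =
      x + ((Finset.range c).filter (fun t => t ∈ Γ ∧ t + x ∉ Γ)).card := by
  classical
  set A : Finset ℕ := (range (c+x)).filter (fun s => s ∈ Γ ∧ ∀ t ∈ Γ, s ≠ t + x) with hAdef
  have h1 : Ap Γ x = ↑A := by
    ext s
    simp only [hAdef, Ap, Set.mem_setOf_eq, coe_filter, mem_range]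
    constructor
    · rintro ⟨hsΓ, hs⟩
      refine ⟨?_, hsΓ, hs⟩
      by_contra hlt
      push_neg at hlt
      exact hs (s - x) (hcond _ (by omega)) (by omega)
    · rintro ⟨_, hsΓ, hs⟩
      exact ⟨hsΓ, hs⟩
  rw [h1, Set.ncard_coe_finset]
  set S : Finset ℕ := (range (c+x)).filter (fun s => s ∈ Γ) with hSdef
  set D : Finset ℕ := (range (c+x)).filter (fun s => s ∈ Γ ∧ ∃ t ∈ Γ, s = t + x) with hDdef
  set S₀ : Finset ℕ := (range c).filter (fun s => s ∈ Γ) with hS0def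
  set C : Finset ℕ := (range c).filter (fun t => t ∈ Γ ∧ t + x ∈ Γ) with hCdef
  have hA : A = S \ D := by
    ext s
    simp only [hAdef, hSdef, hDdef, mem_filter, mem_sdiff, mem_range]
    constructor
    · rintro ⟨h1, h2, h3⟩
      exact ⟨⟨h1, h2⟩, fun h => by obtain ⟨t, ht, hst⟩ := h.2.2; exact h3 t ht hst⟩
    · rintro ⟨⟨h1, h2⟩, h3⟩
      refine ⟨h1, h2, fun t ht hst => h3 ⟨h1, h2, t, ht, hst⟩⟩
  have hD : D = C.image (fun t => t + x) := by
    ext s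
    simp only [hDdef, hCdef, mem_filter, mem_image, mem_range]
    constructor
    · rintro ⟨h1, h2, t, ht, rfl⟩
      exact ⟨t, ⟨by omega, ht, h2⟩, rfl⟩
    · rintro ⟨t, ⟨h1, h2, h3⟩, rfl⟩
      exact ⟨by omega, h3, t, h2, rfl⟩
  have hDC : D.card = C.card := by
    rw [hD, card_image_of_injective _ (add_left_injective x)]
  have hDS : D ⊆ S := by
    intro s hs
    simp only [hDdef, hSdef, mem_filter] at hs ⊢
    exact ⟨hs.1, hs.2.1⟩
  have hCS : C ⊆ S₀ := by
    intro s hs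
    simp only [hCdef, hS0def, mem_filter] at hs ⊢
    exact ⟨hs.1, hs.2.1⟩
  have hS : S.card = S₀.card + x := by
    have hun : S = S₀ ∪ Ico c (c+x) := by
      ext s
      simp only [hSdef, hS0def, mem_filter, mem_union, mem_range, mem_Ico]
      constructor
      · rintro ⟨h1, h2⟩
        rcases lt_or_ge s c with h | h
        · exact Or.inl ⟨h, h2⟩
        · exact Or.inr ⟨h, h1⟩
      · rintro (⟨h1, h2⟩ | ⟨h1, h2⟩)
        · exact ⟨by omega, h2⟩
        · exact ⟨h2, hcond s h1⟩
    have hdisj : Disjoint S₀ (Ico c (c+x)) := by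
      rw [disjoint_left]
      intro s hs hs'
      simp only [hS0def, mem_filter, mem_range] at hs
      simp only [mem_Ico] at hs'
      omega
    rw [hun, card_union_of_disjoint hdisj, Nat.card_Ico]
    omega
  have hpart : C.card + ((range c).filter (fun t => t ∈ Γ ∧ t + x ∉ Γ)).card = S₀.card := by
    have e1 : C = S₀.filter (fun t => t + x ∈ Γ) := by
      rw [hS0def, filter_filter]
    have e2 : (range c).filter (fun t => t ∈ Γ ∧ t + x ∉ Γ) = S₀.filter (fun t => ¬(t + x ∈ Γ)) := by
      rw [hS0def, filter_filter]
    rw [e1, e2]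
    exact card_filter_add_card_filter_not _
  have hcard : A.card = S.card - D.card := by
    rw [hA, card_sdiff_of_subset hDS]
  have hCle : C.card ≤ S₀.card := card_le_card hCS
  omega

open scoped Classical in
lemma B_eq (q : ℕ) (hq : 2 ≤ q) (n : ℕ) (a u : ℕ) (ha : a + 2 ≤ n)
    (hu : ¬ q ∣ u) (hxle : q ^ a * u ≤ q ^ (n-1)) :
    (Finset.range (cGS q n)).filter (fun t => t ∈ GST q n ∧ t + q ^ a * u ∉ GST q n) =
    (Finset.range (q ^ n - q ^ ((n + a + 1)/2) - q ^ a * u)).filter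
      (fun t => q ^ (a+1) ∣ t ∧ t ∈ GST q n) := by
  have hq1 : 1 ≤ q := by omega
  have hn : 1 ≤ n := by omega
  set x := q ^ a * u with hxdef
  set E := (n + a + 1) / 2 with hEdef
  have hE1 : E ≤ n - 1 := by omega
  have hpE : q ^ E ≤ q ^ (n-1) := Nat.pow_le_pow_right hq1 hE1
  have hpow : q ^ n = q ^ (n-1) * q := by
    rw [← pow_succ]; congr 1; omega
  have hpow2 : 2 * q ^ (n-1) ≤ q ^ n := by
    rw [hpow]; nlinarith [Nat.one_le_two_pow (n := n-1), pow_pos (show 0 < q by omega) (n-1)]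
  have hx1 : 1 ≤ x := by
    have : u ≠ 0 := by rintro rfl; exact hu (dvd_zero q)
    have : 1 ≤ u := by omega
    calc 1 ≤ q ^ a := Nat.one_le_pow _ _ (by omega)
      _ ≤ q ^ a * u := Nat.le_mul_of_pos_right _ (by omega)
  have hcc : cGS q n = q ^ n - q ^ ((n+1)/2) := cGS_eq q n
  have hpc : q ^ ((n+1)/2) ≤ q ^ E := Nat.pow_le_pow_right hq1 (by omega)
  ext t
  simp only [mem_filter, mem_range]
  constructor
  · rintro ⟨htc, htΓ, htx⟩
    have step1 : q ^ (a+1) ∣ t := by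
      by_contra hnd
      apply htx
      obtain ⟨v, hv, hd, hi⟩ := (mem_GST q hq1 n hn t).1 htΓ
      have hva : v ≤ a := by
        by_contra h
        exact hnd (dvd_trans (pow_dvd_pow q (by omega)) hd)
      rw [mem_GST q hq1 n hn]
      exact ⟨v, hv, dvd_add hd ((pow_dvd_pow q hva).mul_right u),
        le_trans hi (by omega)⟩
    have step2 : t + x + q ^ E < q ^ n := by
      by_contra h
      push_neg at h
      apply htx
      rw [mem_GST q hq1 n hn]
      exact ⟨a, by omega, dvd_add (dvd_trans (pow_dvd_pow q (by omega)) step1)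
        (dvd_mul_right _ _), by rw [← hEdef]; exact h⟩
    exact ⟨by omega, step1, htΓ⟩
  · rintro ⟨hrange, hdvd, htΓ⟩
    refine ⟨by omega, htΓ, ?_⟩
    intro hmem
    obtain ⟨v, hv, hd, hi⟩ := (mem_GST q hq1 n hn (t + x)).1 hmem
    have hva : v ≤ a := by
      by_contra h
      push_neg at h
      have hd1 : q ^ (a+1) ∣ t + x := dvd_trans (pow_dvd_pow q (by omega)) hd
      have hd2 : q ^ (a+1) ∣ x := by
        have := Nat.dvd_sub hd1 hdvd
        simpa using this
      have : q ^ a * q ∣ q ^ a * u := by rw [← pow_succ]; exact hd2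
      exact hu ((mul_dvd_mul_iff_left (show (q:ℕ) ^ a ≠ 0 by positivity)).1 this)
    have hple : q ^ ((n + v + 1)/2) ≤ q ^ E := Nat.pow_le_pow_right hq1 (by omega)
    omega


open scoped Classical in
lemma count_mono (U1 U2 : ℕ) (h : U1 ≤ U2) (P : ℕ → Prop) [DecidablePred P] :
    ((Finset.range U2).filter P).card ≤ ((Finset.range U1).filter P).card + (U2 - U1) := by
  have hsub : (Finset.range U2).filter P ⊆ (Finset.range U1).filter P ∪ Finset.Ico U1 U2 := by
    intro t ht
    simp only [mem_filter, mem_range, mem_union, mem_Ico] at *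
    rcases lt_or_ge t U1 with h' | h'
    · exact Or.inl ⟨h', ht.2⟩
    · exact Or.inr ⟨h', ht.1⟩
  calc ((Finset.range U2).filter P).card
      ≤ ((Finset.range U1).filter P ∪ Finset.Ico U1 U2).card := card_le_card hsub
    _ ≤ ((Finset.range U1).filter P).card + (Finset.Ico U1 U2).card := card_union_le _ _
    _ = ((Finset.range U1).filter P).card + (U2 - U1) := by rw [Nat.card_Ico]

lemma val_decomp (q : ℕ) (hq : 2 ≤ q) : ∀ m x : ℕ, 1 ≤ x → ¬ q ^ m ∣ x →
    ∃ a u, a < m ∧ x = q ^ a * u ∧ ¬ q ∣ u := by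
  intro m
  induction m with
  | zero => intro x _ h; exact absurd (one_dvd x) (by simpa using h)
  | succ m ih =>
    intro x hx hnd
    by_cases hd : q ∣ x
    · obtain ⟨y, rfl⟩ := hd
      have hy : 1 ≤ y := by
        rcases Nat.eq_zero_or_pos y with rfl | h
        · simp at hx
        · exact h
      have hny : ¬ q ^ m ∣ y := by
        intro h
        exact hnd (by rw [pow_succ, mul_comm (q^m) q]; exact mul_dvd_mul_left q h)
      obtain ⟨a, u, ha, hy2, hu⟩ := ih y hy hny
      exact ⟨a + 1, u, by omega, by rw [hy2]; ring, hu⟩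
    · exact ⟨0, x, by omega, by ring, hd⟩

lemma min_pow (q : ℕ) (hq : 2 ≤ q) (c d : ℕ) (h1 : c ≤ d) (h2 : d ≤ c + 2)
    (a b : ℕ) (hab : c + 2*d ≤ a + 2*b) :
    q ^ c + q ^ d ≤ q ^ a + q ^ b := by
  have hq1 : 1 ≤ q := by omega
  have hcd : q ^ c ≤ q ^ d := Nat.pow_le_pow_right hq1 h1
  rcases Nat.lt_or_ge d b with hbd | hbd
  · -- b ≥ d+1
    have hb1 : q ^ (d+1) ≤ q ^ b := Nat.pow_le_pow_right hq1 (by omega)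
    have hb2 : q ^ (d+1) = q ^ d * q := pow_succ q d
    have hb3 : q ^ d * 2 ≤ q ^ d * q := Nat.mul_le_mul_left _ hq
    have ha0 : 0 ≤ q ^ a := Nat.zero_le _
    omega
  · rcases Nat.lt_or_ge d b with h | hbd'
    · omega
    rcases Nat.eq_or_lt_of_le hbd with hbe | hblt
    · -- b = d
      have hba : c ≤ a := by omega
      have : q ^ c ≤ q ^ a := Nat.pow_le_pow_right hq1 hba
      rw [← hbe]
      omega
    · -- b < d, i.e. b + 1 ≤ d
      rcases Nat.lt_or_ge d a with had | had
      · -- a ≥ d + 1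
        have ha1 : q ^ (d+1) ≤ q ^ a := Nat.pow_le_pow_right hq1 (by omega)
        have ha2 : q ^ (d+1) = q ^ d * q := pow_succ q d
        have ha3 : q ^ d * 2 ≤ q ^ d * q := Nat.mul_le_mul_left _ hq
        have hb0 : 0 ≤ q ^ b := Nat.zero_le _
        omega
      · -- a ≤ d: forces a = d = c+2, b = c+1
        have hae : a = d := by omega
        have hbe : b = c + 1 := by omega
        subst hae; subst hbe
        have : q ^ c ≤ q ^ (c+1) := Nat.pow_le_pow_right hq1 (by omega)
        omega

open scoped Classical in
lemma key_lower (q : ℕ) (hq : 2 ≤ q) (n a u : ℕ) (ha : a + 2 ≤ n) (hu : ¬ q ∣ u)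
    (hxle : q ^ a * u ≤ q ^ (n-1)) :
    q ^ a + (q ^ ((n - a)/2) - 1) ≤ (Ap (GST q n) (q ^ a * u)).ncard := by
  have hq1 : 1 ≤ q := by omega
  have hn1 : 1 ≤ n := by omega
  have hu1 : 1 ≤ u := by
    rcases Nat.eq_zero_or_pos u with rfl | h
    · exact absurd (dvd_zero q) hu
    · exact h
  have hx1 : 1 ≤ q ^ a * u :=
    Nat.mul_le_mul (Nat.one_le_pow _ _ (by omega)) hu1
  have hqa : q ^ a ≤ q ^ a * u := Nat.le_mul_of_pos_right _ (by omega)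
  have h1 := apery_card (GST q n) (cGS q n)
    (fun y hy => conductor_mem q hq1 n hn1 hy) (q ^ a * u) hx1
  rw [B_eq q hq n a u ha hu hxle] at h1
  have hE1 : (n + a + 1)/2 ≤ n - 1 := by omega
  have hpE : q ^ ((n + a + 1)/2) ≤ q ^ (n-1) := Nat.pow_le_pow_right hq1 hE1
  have hpow : q ^ n = q ^ (n-1) * q := by rw [← pow_succ]; congr 1; omega
  have hpow2 : 2 * q ^ (n-1) ≤ q ^ n := by
    have := Nat.mul_le_mul_left (q ^ (n-1)) hq
    omega
  have hU : q ^ n - q ^ ((n + a + 1)/2) - q ^ a * u ≤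
      q ^ n - q ^ ((n + a + 1)/2) - q ^ a := by omega
  have h2 := count_mono _ _ hU (fun t => q ^ (a+1) ∣ t ∧ t ∈ GST q n)
  have h3 := count_exact q hq n a ha
  rw [h3] at h2
  have hdiff : (q ^ n - q ^ ((n + a + 1)/2) - q ^ a) -
      (q ^ n - q ^ ((n + a + 1)/2) - q ^ a * u) ≤ q ^ a * u - q ^ a := by omega
  omega

open scoped Classical in
lemma key_eq (q : ℕ) (hq : 2 ≤ q) (n a : ℕ) (ha : a + 2 ≤ n) (hxle : q ^ a ≤ q ^ (n-1)) :
    (Ap (GST q n) (q ^ a)).ncard = q ^ a + (q ^ ((n - a)/2) - 1) := by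
  have hq1 : 1 ≤ q := by omega
  have hn1 : 1 ≤ n := by omega
  have hu : ¬ q ∣ 1 := by
    intro h
    have := Nat.le_of_dvd one_pos h
    omega
  have hx1 : (1:ℕ) ≤ q ^ a := Nat.one_le_pow _ _ (by omega)
  have h1 := apery_card (GST q n) (cGS q n)
    (fun y hy => conductor_mem q hq1 n hn1 hy) (q ^ a) hx1
  have hxeq : q ^ a = q ^ a * 1 := by ring
  have h2 := B_eq q hq n a 1 ha hu (by omega)
  rw [mul_one] at h2
  rw [h2] at h1
  have h3 := count_exact q hq n a ha
  rw [h3] at h1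
  exact h1

/-- For n ≥ 6, E(Γₙ,2) = q^⌈(n-1)/3⌉ + q^(n-1-2⌈(n-1)/3⌉) - 1.
Note ⌈(n-1)/3⌉ = (n+1)/3 in natural division. -/
theorem stmt16 (q : ℕ) (hq : 2 ≤ q) (n : ℕ) (hn : 6 ≤ n) :
    sInf {v | ∃ x, 1 ≤ x ∧ x ≤ q ^ (n - 1) ∧ v = (Ap (GST q n) x).ncard}
      = q ^ ((n + 1) / 3) + q ^ (n - 1 - 2 * ((n + 1) / 3)) - 1 := by
  have hq1 : 1 ≤ q := by omega
  have hn1 : 1 ≤ n := by omega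
  set d := (n + 1) / 3 with hddef
  set c := n - 1 - 2 * d with hcdef
  have hd2 : 2 ≤ d := by omega
  have hrel : c + 2 * d = n - 1 := by omega
  have h1 : c ≤ d := by omega
  have h2 : d ≤ c + 2 := by omega
  have hc2 : c + 2 ≤ n := by omega
  have hcn1 : c ≤ n - 1 := by omega
  have hdn2 : d ≤ n - 2 := by omega
  have hcd2 : c ≤ n - 2 := by omega
  have hpd1 : 1 ≤ q ^ d := Nat.one_le_pow _ _ (by omega)
  have hpc1 : 1 ≤ q ^ c := Nat.one_le_pow _ _ (by omega)
  -- value at the witness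
  have hval : (Ap (GST q n) (q ^ c)).ncard = q ^ c + (q ^ d - 1) := by
    have := key_eq q hq n c hc2 (Nat.pow_le_pow_right hq1 hcn1)
    have he : (n - c) / 2 = d := by omega
    rw [he] at this
    exact this
  have hmem : (q ^ c + (q ^ d - 1)) ∈
      {v | ∃ x, 1 ≤ x ∧ x ≤ q ^ (n - 1) ∧ v = (Ap (GST q n) x).ncard} :=
    ⟨q ^ c, Nat.one_le_pow _ _ (by omega), Nat.pow_le_pow_right hq1 hcn1, hval.symm⟩
  have hne : {v | ∃ x, 1 ≤ x ∧ x ≤ q ^ (n - 1) ∧ v = (Ap (GST q n) x).ncard}.Nonempty :=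
    ⟨_, hmem⟩
  have hgoal : q ^ d + q ^ c - 1 = q ^ c + (q ^ d - 1) := by omega
  rw [hgoal]
  apply le_antisymm
  · exact Nat.sInf_le hmem
  · apply le_csInf hne
    rintro v ⟨x, hx1, hx2, rfl⟩
    by_cases hdvd : q ^ (n-1) ∣ x
    · -- x = q^(n-1)
      have hxe : x = q ^ (n-1) := le_antisymm hx2 (Nat.le_of_dvd (by omega) hdvd)
      have hlb := apery_card (GST q n) (cGS q n)
        (fun y hy => conductor_mem q hq1 n hn1 hy) x hx1
      have hx_le : x ≤ (Ap (GST q n) x).ncard := by omega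
      have hbig : q ^ c + q ^ d ≤ q ^ (n-1) := by
        have e1 : q ^ c ≤ q ^ (n-2) := Nat.pow_le_pow_right hq1 hcd2
        have e2 : q ^ d ≤ q ^ (n-2) := Nat.pow_le_pow_right hq1 hdn2
        have e3 : q ^ (n-1) = q ^ (n-2) * q := by rw [← pow_succ]; congr 1; omega
        have e4 := Nat.mul_le_mul_left (q ^ (n-2)) hq
        omega
      omega
    · obtain ⟨a, u, ha, rfl, hu⟩ := val_decomp q hq (n-1) x hx1 hdvd
      have hlow := key_lower q hq n a u (by omega) hu hx2
      have hb : c + 2 * d ≤ a + 2 * ((n - a)/2) := by omega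
      have hmin := min_pow q hq c d h1 h2 a ((n - a)/2) hb
      have hpb1 : 1 ≤ q ^ ((n - a)/2) := Nat.one_le_pow _ _ (by omega)
      omega
end

section
/- Let p = a₁x₁ + ⋯ + a_kx_k be a strongly admissible pattern, let Γ be a numerical semigroup that admits p, and let a and b be positive integers. Then the numerical semigroup a·Γ ∪ (b + ℕ) also admits p. -/
/-- Γ admits the pattern with coefficients `co`: for all s₁ ≥ s₂ ≥ ⋯ ≥ s_k in Γ,
the integer `co 0 * s₁ + ⋯ + co (k-1) * s_k` belongs to Γ. -/
def Admits (Γ : Set ℕ) {k : ℕ} (co : Fin k → ℤ) : Prop :=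
  ∀ s : Fin k → ℕ, (∀ i, s i ∈ Γ) → (∀ i j : Fin k, i ≤ j → s j ≤ s i) →
    ∃ m ∈ Γ, (m : ℤ) = ∑ i, co i * (s i : ℤ)

/-- Extension of a coefficient vector to ℕ. -/
def cext {k : ℕ} (co : Fin k → ℤ) (j : ℕ) : ℤ := if h : j < k then co ⟨j, h⟩ else 0

/-- If a numerical semigroup admits a pattern, all partial sums of the
coefficients are nonnegative. -/
lemma lemA {k : ℕ} (co : Fin k → ℤ) (Γ' : Set ℕ) (h1 : IsNumericalSemigroup Γ')
    (h2 : Admits Γ' co) (n : ℕ) (hn1 : 1 ≤ n) (hnk : n ≤ k) :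
    0 ≤ ∑ j ∈ Finset.range n, cext co j := by
  obtain ⟨h0, hadd, hfin⟩ := h1
  obtain ⟨u, hu⟩ := hfin.bddAbove
  have hmem : ∀ m : ℕ, u < m → m ∈ Γ' := by
    intro m hm
    by_contra hc
    exact absurd (hu hc) (by omega)
  by_contra hneg
  push_neg at hneg
  have hS : ∑ j ∈ Finset.range n, cext co j ≤ -1 := by omega
  set S := ∑ j ∈ Finset.range n, cext co j with hSdef
  set R := ∑ j ∈ Finset.Ico n k, cext co j with hRdef
  set M : ℕ := u + 1 with hMdef
  set N : ℕ := u + 1 + (R * (M : ℤ)).toNat + 1 with hNdef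
  have hMN : M ≤ N := by omega
  set s : Fin k → ℕ := fun i => if (i : ℕ) < n then N else M with hsdef
  have hsΓ : ∀ i, s i ∈ Γ' := by
    intro i
    simp only [hsdef]
    split <;> apply hmem <;> omega
  have hsmono : ∀ i j : Fin k, i ≤ j → s j ≤ s i := by
    intro i j hij
    simp only [hsdef]
    have hij' : (i : ℕ) ≤ (j : ℕ) := hij
    by_cases hj : (j : ℕ) < n
    · rw [if_pos hj, if_pos (by omega)]
    · rw [if_neg hj]
      split <;> omega
  obtain ⟨m, hmΓ, hmeq⟩ := h2 s hsΓ hsmono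
  have hcomp : ∑ i : Fin k, co i * (s i : ℤ)
      = S * (N : ℤ) + R * (M : ℤ) := by
    have h1 : ∑ i : Fin k, co i * (s i : ℤ)
        = ∑ j ∈ Finset.range k, cext co j * (if j < n then (N : ℤ) else (M : ℤ)) := by
      rw [← Fin.sum_univ_eq_sum_range (fun j => cext co j * (if j < n then (N : ℤ) else (M : ℤ))) k]
      refine Finset.sum_congr rfl fun i _ => ?_
      have hlt : (i : ℕ) < k := i.isLt
      simp only [cext, dif_pos hlt, Fin.eta, hsdef]
      split <;> simp
    rw [h1, Finset.range_eq_Ico, ← Finset.sum_Ico_consecutive _ (Nat.zero_le n) hnk]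
    have h2 : ∑ j ∈ Finset.Ico 0 n, cext co j * (if j < n then (N : ℤ) else (M : ℤ))
        = S * (N : ℤ) := by
      rw [hSdef, Finset.sum_mul, Finset.range_eq_Ico]
      refine Finset.sum_congr rfl fun j hj => ?_
      rw [if_pos (Finset.mem_Ico.mp hj).2]
    have h3 : ∑ j ∈ Finset.Ico n k, cext co j * (if j < n then (N : ℤ) else (M : ℤ))
        = R * (M : ℤ) := by
      rw [hRdef, Finset.sum_mul]
      refine Finset.sum_congr rfl fun j hj => ?_
      rw [if_neg (by have := (Finset.mem_Ico.mp hj).1; omega)]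
    rw [h2, h3]
  rw [hcomp] at hmeq
  have hm0 : (0 : ℤ) ≤ m := Int.ofNat_nonneg m
  have hRM : R * (M : ℤ) ≤ ((R * (M : ℤ)).toNat : ℤ) := Int.self_le_toNat _
  have hNbig : R * (M : ℤ) < (N : ℤ) := by
    have : ((R * (M : ℤ)).toNat : ℤ) < (N : ℤ) := by exact_mod_cast (by omega : (R * (M:ℤ)).toNat < N)
    omega
  have hN0 : (0 : ℤ) ≤ (N : ℤ) := Int.ofNat_nonneg N
  have hSN : S * (N : ℤ) ≤ -1 * (N : ℤ) := mul_le_mul_of_nonneg_right hS hN0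
  omega

/-- Abel-summation inequality: if all partial sums of coefficients are ≥ 1,
then the pattern value dominates the first (largest) variable. -/
lemma abel_ineq (c t : ℕ → ℤ) (n : ℕ) (hn : 1 ≤ n)
    (hσ : ∀ m, 1 ≤ m → m ≤ n → 1 ≤ ∑ j ∈ Finset.range m, c j)
    (ht0 : ∀ j, 0 ≤ t j) (hmono : ∀ i j : ℕ, i ≤ j → t j ≤ t i) :
    t 0 ≤ ∑ i ∈ Finset.range n, c i * t i := by
  have key := Finset.sum_range_by_parts t c n
  simp only [smul_eq_mul] at key
  have h1 : ∑ i ∈ Finset.range n, c i * t i = ∑ i ∈ Finset.range n, t i * c i :=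
    Finset.sum_congr rfl (fun i _ => mul_comm _ _)
  rw [h1, key]
  have hsum : ∑ i ∈ Finset.range (n-1), (t (i+1) - t i) * ∑ j ∈ Finset.range (i+1), c j
      ≤ ∑ i ∈ Finset.range (n-1), (t (i+1) - t i) := by
    refine Finset.sum_le_sum fun i hi => ?_
    have hik : i < n - 1 := Finset.mem_range.mp hi
    have hG : 1 ≤ ∑ j ∈ Finset.range (i+1), c j := hσ (i+1) (by omega) (by omega)
    have hx : t (i+1) - t i ≤ 0 := by have := hmono i (i+1) (Nat.le_succ i); linarith
    nlinarith
  have htel : ∑ i ∈ Finset.range (n-1), (t (i+1) - t i) = t (n-1) - t 0 :=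
    Finset.sum_range_sub t (n-1)
  have hGn : 1 ≤ ∑ j ∈ Finset.range n, c j := hσ n hn le_rfl
  have htn : 0 ≤ t (n-1) := ht0 _
  nlinarith [mul_le_mul_of_nonneg_left hGn htn]

/-- If `p = a₁x₁ + ⋯ + a_kx_k` is a strongly admissible pattern (both `p` and
`p' = (a₁-1)x₁ + a₂x₂ + ⋯ + a_kx_k` are admitted by some numerical semigroup),
Γ is a numerical semigroup admitting `p` and `a, b` are positive integers,
then `a·Γ ∪ (b + ℕ)` admits `p`. -/
theorem stmt19 (k : ℕ) (hk : 1 ≤ k) (co : Fin k → ℤ) (hco : ∀ i, co i ≠ 0)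
    (hadm : ∃ Γ', IsNumericalSemigroup Γ' ∧ Admits Γ' co)
    (hstrong : ∃ Γ'', IsNumericalSemigroup Γ'' ∧
      Admits Γ'' (fun i => if i = (⟨0, hk⟩ : Fin k) then co i - 1 else co i))
    (Γ : Set ℕ) (hΓ : IsNumericalSemigroup Γ) (hΓp : Admits Γ co)
    (a b : ℕ) (ha : 1 ≤ a) (hb : 1 ≤ b) :
    Admits ((fun x => a * x) '' Γ ∪ {x | b ≤ x}) co := by
  obtain ⟨Γ'', hΓ''ns, hΓ''p⟩ := hstrong
  -- partial sums of co are ≥ 1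
  have hσ : ∀ m, 1 ≤ m → m ≤ k → 1 ≤ ∑ j ∈ Finset.range m, cext co j := by
    intro m hm1 hmk
    have h0 := lemA _ Γ'' hΓ''ns hΓ''p m hm1 hmk
    have heq : ∑ j ∈ Finset.range m,
        cext (fun i => if i = (⟨0, hk⟩ : Fin k) then co i - 1 else co i) j
        = ∑ j ∈ Finset.range m, (cext co j - if j = 0 then 1 else 0) := by
      refine Finset.sum_congr rfl fun j hj => ?_
      have hjk : j < k := by have := Finset.mem_range.mp hj; omega
      simp only [cext, dif_pos hjk]
      by_cases hj0 : j = 0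
      · subst hj0
        simp [Fin.mk.injEq]
      · rw [if_neg (by simp [Fin.mk.injEq, hj0]), if_neg hj0]
        ring
    rw [heq, Finset.sum_sub_distrib] at h0
    have hind : ∑ j ∈ Finset.range m, (if j = 0 then (1 : ℤ) else 0) = 1 := by
      rw [Finset.sum_ite_eq' (Finset.range m) 0 (fun _ => (1 : ℤ))]
      rw [if_pos (Finset.mem_range.mpr (by omega))]
    rw [hind] at h0
    omega
  intro s hs hmono
  -- extended nonincreasing sequence
  set t : ℕ → ℤ := fun j => if h : j < k then (s ⟨j, h⟩ : ℤ) else 0 with htdef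
  have ht0 : ∀ j, 0 ≤ t j := by
    intro j; simp only [htdef]; split
    · exact Int.ofNat_nonneg _
    · exact le_refl 0
  have htmono : ∀ i j : ℕ, i ≤ j → t j ≤ t i := by
    intro i j hij
    simp only [htdef]
    by_cases hj : j < k
    · have hi : i < k := by omega
      rw [dif_pos hj, dif_pos hi]
      exact_mod_cast hmono ⟨i, hi⟩ ⟨j, hj⟩ hij
    · rw [dif_neg hj]
      split
      · exact Int.ofNat_nonneg _
      · exact le_refl 0
  have hconv : ∑ i : Fin k, co i * (s i : ℤ) = ∑ j ∈ Finset.range k, cext co j * t j := by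
    rw [← Fin.sum_univ_eq_sum_range (fun j => cext co j * t j) k]
    refine Finset.sum_congr rfl fun i _ => ?_
    have hlt : (i : ℕ) < k := i.isLt
    simp only [cext, htdef, dif_pos hlt, Fin.eta]
  have habel : t 0 ≤ ∑ i : Fin k, co i * (s i : ℤ) := by
    rw [hconv]
    exact abel_ineq _ _ k hk hσ ht0 htmono
  have ht0eq : t 0 = (s ⟨0, hk⟩ : ℤ) := by
    show (if h : 0 < k then (s ⟨0, h⟩ : ℤ) else 0) = _
    exact dif_pos hk
  by_cases hall : ∀ i, s i ∈ (fun x => a * x) '' Γ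
  · -- all values are multiples of a of elements of Γ
    simp only [Set.mem_image] at hall
    choose v hvΓ hvs using hall
    have hvmono : ∀ i j : Fin k, i ≤ j → v j ≤ v i := by
      intro i j hij
      have : a * v j ≤ a * v i := by rw [hvs i, hvs j]; exact hmono i j hij
      exact Nat.le_of_mul_le_mul_left this (by omega)
    obtain ⟨m, hmΓ, hmeq⟩ := hΓp v hvΓ hvmono
    refine ⟨a * m, Or.inl ⟨m, hmΓ, rfl⟩, ?_⟩
    have : ((a * m : ℕ) : ℤ) = (a : ℤ) * ∑ i, co i * (v i : ℤ) := by
      push_cast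
      rw [hmeq]
    rw [this, Finset.mul_sum]
    refine Finset.sum_congr rfl fun i _ => ?_
    have : ((a * v i : ℕ) : ℤ) = (s i : ℤ) := by exact_mod_cast congrArg (Nat.cast : ℕ → ℤ) (hvs i)
    push_cast at this
    rw [← this]
    ring
  · push_neg at hall
    obtain ⟨i, hi⟩ := hall
    have hsi : b ≤ s i := by
      rcases hs i with h | h
      · exact absurd h hi
      · exact h
    have hle : s i ≤ s ⟨0, hk⟩ := hmono ⟨0, hk⟩ i (by simp [Fin.le_def])
    have hT : (b : ℤ) ≤ ∑ i : Fin k, co i * (s i : ℤ) := by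
      rw [ht0eq] at habel
      have : (b : ℤ) ≤ (s ⟨0, hk⟩ : ℤ) := by exact_mod_cast le_trans hsi hle
      linarith
    set T := ∑ i : Fin k, co i * (s i : ℤ) with hTdef
    have hT0 : 0 ≤ T := le_trans (by exact_mod_cast Nat.zero_le b) hT
    refine ⟨T.toNat, Or.inr ?_, ?_⟩
    · show b ≤ T.toNat
      omega
    · rw [Int.toNat_of_nonneg hT0]
end
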